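/- Let T be a finite tree with maximum degree at most 4 and φ an s-model of T. If the ordered edge (p,v) of T is critical in φ, then b(T) ≥ b^ℓ_φ(p,v). -/

import Mathlib

open SimpleGraph

/-- The closed axis-parallel grid segment (bounding box) with corners `p` and `q`.
For axis-aligned `p`, `q` this is exactly the straight segment joining them. -/
def seg (p q : ℤ × ℤ) : Set (ℤ × ℤ) :=
  {r | r.1 ∈ Set.uIcc p.1 q.1 ∧ r.2 ∈ Set.uIcc p.2 q.2}

/-- A straight model (s-model) of a graph `G`: an injective drawing of the vertices on the
grid `ℤ × ℤ` such that every edge is a horizontal or vertical straight segment, and segments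
of distinct edges meet only at the image of a common endpoint. -/
structure SModel {V : Type*} (G : SimpleGraph V) where
  toFun : V → ℤ × ℤ
  inj : Function.Injective toFun
  axisAligned : ∀ ⦃u v : V⦄, G.Adj u v →
    ((toFun u).1 = (toFun v).1 ∧ (toFun u).2 ≠ (toFun v).2) ∨
    ((toFun u).2 = (toFun v).2 ∧ (toFun u).1 ≠ (toFun v).1)
  noCross : ∀ ⦃u v x y : V⦄, G.Adj u v → G.Adj x y → s(u, v) ≠ s(x, y) →
    ∀ r ∈ seg (toFun u) (toFun v) ∩ seg (toFun x) (toFun y),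
      ∃ w : V, (w = u ∨ w = v) ∧ (w = x ∨ w = y) ∧ toFun w = r

/-- The drawing `φ` bends at `b` when passing `a, b, c`: one of the two segments is
vertical and the other horizontal. -/
def bendAt {V : Type*} (φ : V → ℤ × ℤ) (a b c : V) : Prop :=
  ((φ a).1 = (φ b).1 ∧ (φ b).2 = (φ c).2) ∨
  ((φ a).2 = (φ b).2 ∧ (φ b).1 = (φ c).1)

instance {V : Type*} (φ : V → ℤ × ℤ) (a b c : V) : Decidable (bendAt φ a b c) := by
  unfold bendAt; infer_instance

/-- The list of internal vertices, in order, at which the drawing of the given vertex list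
bends. -/
def bendVertices {V : Type*} (φ : V → ℤ × ℤ) : List V → List V
  | a :: b :: c :: rest =>
      (if bendAt φ a b c then [b] else []) ++ bendVertices φ (b :: c :: rest)
  | _ => []

/-- The number of bends of (the drawing of) a vertex list. -/
def bends {V : Type*} (φ : V → ℤ × ℤ) (L : List V) : ℕ :=
  (bendVertices φ L).length

section Defs

variable {V : Type*} [Fintype V]

/-- `b(φ)`: the maximum number of bends over all leaf-to-leaf paths (0 if there are none). -/
noncomputable def bendNum {G : SimpleGraph V} [DecidableRel G.Adj] (M : SModel G) : ℕ :=
  sSup {n | ∃ (a b : V) (W : G.Walk a b), W.IsPath ∧ G.degree a = 1 ∧ G.degree b = 1 ∧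
    bends M.toFun W.support = n}

/-- `b(T)`: the minimum of `b(φ)` over all s-models `φ`. -/
noncomputable def treeBendNum (G : SimpleGraph V) [DecidableRel G.Adj] : ℕ :=
  sInf {n | ∃ M : SModel G, bendNum M = n}

/-- `b^ℓ_φ(p, v)`: the maximum number of bends over all paths from `p` to a leaf that
contain `v`. -/
noncomputable def leafBend {G : SimpleGraph V} [DecidableRel G.Adj] (M : SModel G)
    (p v : V) : ℕ :=
  sSup {n | ∃ (f : V) (W : G.Walk p f), W.IsPath ∧ G.degree f = 1 ∧ v ∈ W.support ∧
    bends M.toFun W.support = n}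

/-- `b^ℓ_T(p, v)`: the minimum of `b^ℓ_φ(p, v)` over all s-models `φ`. -/
noncomputable def leafBendMin (G : SimpleGraph V) [DecidableRel G.Adj] (p v : V) : ℕ :=
  sInf {n | ∃ M : SModel G, leafBend M p v = n}

/-- `b_φ(v)`: the maximum number of bends over all leaf-to-leaf paths containing `v`. -/
noncomputable def bendNumAt {G : SimpleGraph V} [DecidableRel G.Adj] (M : SModel G)
    (v : V) : ℕ :=
  sSup {n | ∃ (a b : V) (W : G.Walk a b), W.IsPath ∧ G.degree a = 1 ∧ G.degree b = 1 ∧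
    v ∈ W.support ∧ bends M.toFun W.support = n}

/-- `p`, `q`, `r` lie on a common horizontal or vertical grid line. -/
def collinearGrid (p q r : ℤ × ℤ) : Prop :=
  (p.1 = q.1 ∧ q.1 = r.1) ∨ (p.2 = q.2 ∧ q.2 = r.2)

/-- `v` is balanced in the s-model `M`: either it has degree at most 1, or two neighbors
realizing the two largest values of `b^ℓ_M(v, ·)` are drawn collinearly with `v`. -/
def BalancedAt {G : SimpleGraph V} [DecidableRel G.Adj] (M : SModel G) (v : V) : Prop :=
  G.degree v ≤ 1 ∨
  ∃ u1 u2 : V, u1 ≠ u2 ∧ G.Adj v u1 ∧ G.Adj v u2 ∧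
    collinearGrid (M.toFun u1) (M.toFun v) (M.toFun u2) ∧
    ∀ w : V, G.Adj v w → w ≠ u1 → w ≠ u2 →
      leafBend M v w ≤ min (leafBend M v u1) (leafBend M v u2)

/-- The value `b^ℓ_M(v, u)` of a real or virtual (`none`) neighbor `u` of `v`; virtual
neighbors have value `-1`. -/
noncomputable def optVal {G : SimpleGraph V} [DecidableRel G.Adj] (M : SModel G) (v : V) :
    Option V → ℤ
  | none => -1
  | some u => (leafBend M v u : ℤ)

/-- `u1` and `u2` are the first two entries of a nonincreasing (w.r.t. `b^ℓ_M(v, ·)`)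
ordering of the real neighbors of `v` other than `p`, padded at the end with virtual
neighbors `none`. -/
def TopTwo {G : SimpleGraph V} [DecidableRel G.Adj] (M : SModel G) (p v : V) :
    Option V → Option V → Prop
  | none, u2 => u2 = none ∧ ∀ w, G.Adj v w → w = p
  | some a, none => G.Adj v a ∧ a ≠ p ∧ ∀ w, G.Adj v w → w ≠ p → w = a
  | some a, some b => G.Adj v a ∧ a ≠ p ∧ G.Adj v b ∧ b ≠ p ∧ a ≠ b ∧
      leafBend M v b ≤ leafBend M v a ∧
      ∀ w, G.Adj v w → w ≠ p → w ≠ a → w ≠ b → leafBend M v w ≤ leafBend M v b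

/-- Criticality of an ordered pair in an s-model `M`: every pair `(p, ∅)` is critical, and an
ordered edge `(p, v)` is critical if, for the first two entries `u1, u2` of some nonincreasing
ordering of the other neighbors of `v`, either `b^ℓ_M(p,v) = b^1` and `(v, u1)` is critical, or
`b^ℓ_M(p,v) = b^2 + 1` and both `(v, u1)` and `(v, u2)` are critical. -/
inductive Critical {G : SimpleGraph V} [DecidableRel G.Adj] (M : SModel G) :
    V → Option V → Prop
  | base (p : V) : Critical M p none
  | top1 (p v : V) (u1 u2 : Option V) (hadj : G.Adj p v)
      (htop : TopTwo M p v u1 u2)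
      (hb : (leafBend M p v : ℤ) = optVal M v u1)
      (hc : Critical M v u1) : Critical M p (some v)
  | top2 (p v : V) (u1 u2 : Option V) (hadj : G.Adj p v)
      (htop : TopTwo M p v u1 u2)
      (hb : (leafBend M p v : ℤ) = optVal M v u2 + 1)
      (hc1 : Critical M v u1) (hc2 : Critical M v u2) : Critical M p (some v)

end Defs

/-- Membership in the class of trees of the statement: a tree with maximum degree at most 4
having a vertex `r` of degree exactly 2 with distinct neighbors `r1`, `r2`, admitting a
balanced s-model `M` with `b^ℓ_M(r,r1) = b^ℓ_M(r,r2) = k - 1`. -/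
def ClassProp (k : ℕ) (V : Type) [Fintype V] (G : SimpleGraph V)
    [DecidableRel G.Adj] : Prop :=
  G.IsTree ∧ (∀ v, G.degree v ≤ 4) ∧
  ∃ (r r1 r2 : V) (M : SModel G),
    G.degree r = 2 ∧ G.Adj r r1 ∧ G.Adj r r2 ∧ r1 ≠ r2 ∧
    (∀ v, BalancedAt M v) ∧ leafBend M r r1 = k - 1 ∧ leafBend M r r2 = k - 1

/-- The full binary tree of height `k`, with vertex set the lists over `Bool` of length at
most `k`, rooted at the empty list; children of `l` are the lists `c :: l`. -/
def fullBinTree (k : ℕ) : SimpleGraph {l : List Bool // l.length ≤ k} :=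
  SimpleGraph.fromRel (fun a b => ∃ c : Bool, (b : List Bool) = c :: (a : List Bool))

/-- A tree with maximum degree at most 4 and minimum bend number `k`. -/
def TreeProp (k : ℕ) (V : Type) [Fintype V] (G : SimpleGraph V)
    [DecidableRel G.Adj] : Prop :=
  G.IsTree ∧ (∀ v, G.degree v ≤ 4) ∧ treeBendNum G = k

/-- The grid graph on `ℤ × ℤ`: two grid points are adjacent iff their distance is 1. -/
def gridGraph : SimpleGraph (ℤ × ℤ) :=
  SimpleGraph.fromRel (fun p q =>
    (p.1 = q.1 ∧ (p.2 - q.2).natAbs = 1) ∨ (p.2 = q.2 ∧ (p.1 - q.1).natAbs = 1))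

/-- `G` is a `B_k`-EPG graph: it has an EPG model by grid paths each with at most `k` bends;
distinct vertices are adjacent iff the corresponding grid paths share a grid edge. -/
def IsBkEPG {X : Type*} (G : SimpleGraph X) (k : ℕ) : Prop :=
  ∃ (s t : X → ℤ × ℤ) (P : ∀ x : X, gridGraph.Walk (s x) (t x)),
    (∀ x, (P x).IsPath) ∧ (∀ x, bends (id : ℤ × ℤ → ℤ × ℤ) (P x).support ≤ k) ∧
    ∀ x y : X, x ≠ y → (G.Adj x y ↔ ∃ e, e ∈ (P x).edges ∧ e ∈ (P y).edges)

/-- `⟨T, (Q x)_{x}⟩` is a VPT model of `G`: the `Q x` are pairwise distinct paths of the host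
tree `T`, and distinct vertices of `G` are adjacent iff their paths share a vertex of `T`. -/
def IsVPTModel {X W : Type*} (G : SimpleGraph X) (T : SimpleGraph W)
    (s t : X → W) (Q : ∀ x : X, T.Walk (s x) (t x)) : Prop :=
  (∀ x, (Q x).IsPath) ∧
  (∀ x y : X, x ≠ y → {w : W | w ∈ (Q x).support} ≠ {w : W | w ∈ (Q y).support}) ∧
  (∀ x y : X, x ≠ y → (G.Adj x y ↔ ∃ w : W, w ∈ (Q x).support ∧ w ∈ (Q y).support))

/-- A host tree with maximum degree at most 3 and minimum bend number `k`. -/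
def HostProp (k : ℕ) (W : Type) [Fintype W] (T : SimpleGraph W)
    [DecidableRel T.Adj] : Prop :=
  T.IsTree ∧ (∀ v, T.degree v ≤ 3) ∧ treeBendNum T = k

/-!
If `(p, v)` is critical in `φ`, then `b^ℓ_φ(p, v) ≤ b^ℓ_ψ(p, v)` for every s-model `ψ`, by
induction on criticality. In the first case the bound for `(v, u¹)` passes to `(p, v)` by
prolonging paths through `p`. In the second case, at most two neighbors of `v` can be drawn on a
grid line through `v`, so `ψ` bends at `v` between `p` and one of `u¹`, `u²`, which pays for the
`+ 1`. Finally, in a tree every path from `p` to a leaf extends to a leaf-to-leaf path, so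
`b^ℓ_ψ(p, v) ≤ b(ψ)`, and minimizing over `ψ` gives the claim.
-/

open Walk

section Bends

variable {V : Type*} (φ : V → ℤ × ℤ)

theorem bends_cons_cons_cons (a b c : V) (l : List V) :
    bends φ (a :: b :: c :: l) = bends φ (b :: c :: l) + if bendAt φ a b c then 1 else 0 := by
  simp only [bends, bendVertices, List.length_append]
  split <;> simp [Nat.add_comm]

theorem bends_le_length : ∀ l : List V, bends φ l ≤ l.length
  | a :: b :: c :: l => by
    have := bends_le_length (b :: c :: l)
    rw [bends_cons_cons_cons]
    simp only [List.length_cons] at this ⊢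
    split <;> omega
  | [] | [_] | [_, _] => by simp [bends, bendVertices]

theorem bends_le_bends_cons (a : V) : ∀ l : List V, bends φ l ≤ bends φ (a :: l)
  | b :: c :: l => by rw [bends_cons_cons_cons]; exact Nat.le_add_right _ _
  | [] | [_] => by simp [bends, bendVertices]

theorem bends_le_bends_append_left (l₁ l₂ : List V) : bends φ l₂ ≤ bends φ (l₁ ++ l₂) := by
  induction l₁ with
  | nil => rfl
  | cons a l ih => exact ih.trans (bends_le_bends_cons φ a _)

end Bends

section Geometry

variable {V : Type*} {G : SimpleGraph V}

theorem add_sign_sub_mem_uIcc (a b : ℤ) : a + (b - a).sign ∈ Set.uIcc a b := by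
  rw [Set.mem_uIcc]
  rcases lt_trichotomy a b with h | rfl | h
  · rw [Int.sign_eq_one_of_pos (by omega)]; omega
  · simp
  · rw [Int.sign_eq_neg_one_of_neg (by omega)]; omega

theorem Int.sign_eq_or_sign_eq_or_sign_eq {a b c : ℤ} (ha : a ≠ 0) (hb : b ≠ 0) (hc : c ≠ 0) :
    a.sign = b.sign ∨ a.sign = c.sign ∨ b.sign = c.sign := by
  rcases ha.lt_or_gt with ha | ha <;> rcases hb.lt_or_gt with hb | hb <;>
    rcases hc.lt_or_gt with hc | hc <;>
    simp [Int.sign_eq_one_of_pos, Int.sign_eq_neg_one_of_neg, *]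

/-- Two edges leaving `v` in the same direction would share the grid point next to `φ v`. -/
theorem SModel.eq_of_sign_sub_eq (M : SModel G) {v x y : V} (hx : G.Adj v x) (hy : G.Adj v y)
    (h₁ : ((M.toFun x).1 - (M.toFun v).1).sign = ((M.toFun y).1 - (M.toFun v).1).sign)
    (h₂ : ((M.toFun x).2 - (M.toFun v).2).sign = ((M.toFun y).2 - (M.toFun v).2).sign) :
    x = y := by
  by_contra hxy
  set r : ℤ × ℤ := ((M.toFun v).1 + ((M.toFun x).1 - (M.toFun v).1).sign,
    (M.toFun v).2 + ((M.toFun x).2 - (M.toFun v).2).sign) with hr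
  have hrx : r ∈ seg (M.toFun v) (M.toFun x) :=
    ⟨add_sign_sub_mem_uIcc _ _, add_sign_sub_mem_uIcc _ _⟩
  have hry : r ∈ seg (M.toFun v) (M.toFun y) := by
    simp only [r, h₁, h₂]
    exact ⟨add_sign_sub_mem_uIcc _ _, add_sign_sub_mem_uIcc _ _⟩
  have hne : s(v, x) ≠ s(v, y) := by simp [hxy, hy.ne]
  obtain ⟨w, hw₁, hw₂, hwr⟩ := M.noCross hx hy hne r ⟨hrx, hry⟩
  rcases hw₁ with hwv | hwx
  · rw [hwv, hr, Prod.ext_iff] at hwr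
    have h₁ : ((M.toFun x).1 - (M.toFun v).1).sign = 0 := by omega
    have h₂ : ((M.toFun x).2 - (M.toFun v).2).sign = 0 := by omega
    rw [Int.sign_eq_zero_iff_zero, sub_eq_zero] at h₁ h₂
    exact hx.ne (M.inj (Prod.ext h₁.symm h₂.symm))
  · exact hw₂.elim (fun h => hx.ne (h.symm.trans hwx)) (fun h => hxy (hwx.symm.trans h))

theorem SModel.bendAt_or_bendAt (M : SModel G) {p v a b : V} (hp : G.Adj v p) (ha : G.Adj v a)
    (hb : G.Adj v b) (hpa : p ≠ a) (hpb : p ≠ b) (hab : a ≠ b) :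
    bendAt M.toFun p v a ∨ bendAt M.toFun p v b := by
  by_contra! ⟨hna, hnb⟩
  set φ := M.toFun
  rcases M.axisAligned hp with ⟨hp₁, hp₂⟩ | ⟨hp₂, hp₁⟩
  · have vertical : ∀ {x}, G.Adj v x → ¬bendAt φ p v x →
        (φ v).1 = (φ x).1 ∧ (φ v).2 ≠ (φ x).2 := fun {x} hx hnx =>
      (M.axisAligned hx).resolve_right fun h => hnx (Or.inl ⟨hp₁.symm, h.1⟩)
    have same : ∀ {x y}, G.Adj v x → G.Adj v y → (φ v).1 = (φ x).1 → (φ v).1 = (φ y).1 →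
        ((φ x).2 - (φ v).2).sign = ((φ y).2 - (φ v).2).sign → x = y :=
      fun hx hy hx₁ hy₁ => M.eq_of_sign_sub_eq hx hy (by rw [← hx₁, ← hy₁])
    obtain ⟨ha₁, ha₂⟩ := vertical ha hna
    obtain ⟨hb₁, hb₂⟩ := vertical hb hnb
    rcases Int.sign_eq_or_sign_eq_or_sign_eq (sub_ne_zero.2 (Ne.symm hp₂))
      (sub_ne_zero.2 (Ne.symm ha₂)) (sub_ne_zero.2 (Ne.symm hb₂)) with h | h | h
    · exact hpa (same hp ha hp₁ ha₁ h)
    · exact hpb (same hp hb hp₁ hb₁ h)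
    · exact hab (same ha hb ha₁ hb₁ h)
  · have horizontal : ∀ {x}, G.Adj v x → ¬bendAt φ p v x →
        (φ v).2 = (φ x).2 ∧ (φ v).1 ≠ (φ x).1 := fun {x} hx hnx =>
      (M.axisAligned hx).resolve_left fun h => hnx (Or.inr ⟨hp₂.symm, h.1⟩)
    have same : ∀ {x y}, G.Adj v x → G.Adj v y → (φ v).2 = (φ x).2 → (φ v).2 = (φ y).2 →
        ((φ x).1 - (φ v).1).sign = ((φ y).1 - (φ v).1).sign → x = y :=
      fun hx hy hx₂ hy₂ h => M.eq_of_sign_sub_eq hx hy h (by rw [← hx₂, ← hy₂])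
    obtain ⟨ha₂, ha₁⟩ := horizontal ha hna
    obtain ⟨hb₂, hb₁⟩ := horizontal hb hnb
    rcases Int.sign_eq_or_sign_eq_or_sign_eq (sub_ne_zero.2 (Ne.symm hp₁))
      (sub_ne_zero.2 (Ne.symm ha₁)) (sub_ne_zero.2 (Ne.symm hb₁)) with h | h | h
    · exact hpa (same hp ha hp₂ ha₂ h)
    · exact hpb (same hp hb hp₂ hb₂ h)
    · exact hab (same ha hb ha₂ hb₂ h)

end Geometry

section LeafPaths

variable {V : Type*} [Fintype V] {G : SimpleGraph V}

theorem bends_support_le_card (φ : V → ℤ × ℤ) {u v : V} {W : G.Walk u v} (hW : W.IsPath) :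
    bends φ W.support ≤ Fintype.card V := by
  have := bends_le_length φ W.support
  have := hW.length_lt
  rw [length_support] at *
  omega

variable [DecidableRel G.Adj]

theorem SimpleGraph.IsAcyclic.exists_isPath_append_degree_eq_one (hG : G.IsAcyclic) {u v : V}
    (W : G.Walk u v) (hW : W.IsPath) (hnil : ¬W.Nil) :
    ∃ (g : V) (X : G.Walk v g), (W.append X).IsPath ∧ G.degree g = 1 := by
  by_cases hv : G.degree v = 1
  · exact ⟨v, nil, by rwa [append_nil], hv⟩
  have hpen : G.Adj v W.penultimate := (W.adj_penultimate hnil).symm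
  have hdeg : 1 < (G.neighborFinset v).card := by
    rw [card_neighborFinset_eq_degree]
    have := G.degree_pos_iff_exists_adj v |>.2 ⟨_, hpen⟩
    omega
  obtain ⟨x, hx, hxpen⟩ := Finset.exists_mem_ne hdeg W.penultimate
  rw [mem_neighborFinset] at hx
  have hxW : x ∉ W.support := fun h => hxpen (hG.eq_penultimate_of_adj_end hW hx h)
  obtain ⟨g, X, hX, hg⟩ := hG.exists_isPath_append_degree_eq_one (W.concat hx)
    (hW.concat hxW hx) (by simp [concat_eq_append])
  refine ⟨g, cons hx X, ?_, hg⟩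
  rwa [concat_eq_append, ← append_assoc, cons_append, nil_append] at hX
termination_by Fintype.card V - W.length
decreasing_by
  have := hW.length_lt
  rw [length_concat]
  omega

theorem bddAbove_leafBend (M : SModel G) (p v : V) :
    BddAbove {n | ∃ (f : V) (W : G.Walk p f), W.IsPath ∧ G.degree f = 1 ∧ v ∈ W.support ∧
      bends M.toFun W.support = n} :=
  ⟨Fintype.card V, by rintro _ ⟨f, W, hW, -, -, rfl⟩; exact bends_support_le_card _ hW⟩

theorem bddAbove_bendNum (M : SModel G) :
    BddAbove {n | ∃ (a b : V) (W : G.Walk a b), W.IsPath ∧ G.degree a = 1 ∧ G.degree b = 1 ∧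
      bends M.toFun W.support = n} :=
  ⟨Fintype.card V, by rintro _ ⟨a, b, W, hW, -, -, rfl⟩; exact bends_support_le_card _ hW⟩

theorem le_leafBend (M : SModel G) {p v f : V} {W : G.Walk p f} (hW : W.IsPath)
    (hf : G.degree f = 1) (hv : v ∈ W.support) : bends M.toFun W.support ≤ leafBend M p v :=
  le_csSup (bddAbove_leafBend M p v) ⟨f, W, hW, hf, hv, rfl⟩

theorem exists_isPath_bends_eq_leafBend (hG : G.IsAcyclic) (M : SModel G) {p v : V}
    (hpv : G.Adj p v) :
    ∃ (f : V) (W : G.Walk p f), W.IsPath ∧ G.degree f = 1 ∧ v ∈ W.support ∧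
      bends M.toFun W.support = leafBend M p v := by
  obtain ⟨g, X, hX, hg⟩ := hG.exists_isPath_append_degree_eq_one (cons hpv nil)
    (by simp [hpv.ne]) not_nil_cons
  exact (Nat.sSup_mem · (bddAbove_leafBend M p v)) ⟨_, g, _, hX, hg, by simp, rfl⟩

theorem bends_le_bendNum (hG : G.IsAcyclic) (M : SModel G) {p f : V} {W : G.Walk p f}
    (hW : W.IsPath) (hf : G.degree f = 1) : bends M.toFun W.support ≤ bendNum M := by
  by_cases hnil : W.Nil
  · simp [nil_iff_support_eq.1 hnil, bends, bendVertices]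
  obtain ⟨g, X, hX, hg⟩ :=
    hG.exists_isPath_append_degree_eq_one W.reverse hW.reverse (by simpa using hnil)
  have hXW : (X.reverse.append W).IsPath := by simpa [reverse_append] using hX.reverse
  calc bends M.toFun W.support ≤ bends M.toFun (X.reverse.append W).support := by
        rw [support_append_eq_support_dropLast_append]
        exact bends_le_bends_append_left _ _ _
    _ ≤ bendNum M := le_csSup (bddAbove_bendNum M) ⟨g, f, _, hXW, hg, hf, rfl⟩

theorem leafBend_le_bendNum (hG : G.IsAcyclic) (M : SModel G) (p v : V) :
    leafBend M p v ≤ bendNum M :=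
  csSup_le' <| by rintro _ ⟨f, W, hW, hf, -, rfl⟩; exact bends_le_bendNum hG M hW hf

theorem leafBend_add_le_leafBend (hG : G.IsAcyclic) (M : SModel G) {p v c : V}
    (hpv : G.Adj p v) (hvc : G.Adj v c) (hcp : c ≠ p) :
    leafBend M v c + (if bendAt M.toFun p v c then 1 else 0) ≤ leafBend M p v := by
  obtain ⟨f, W, hW, hf, hcW, hbends⟩ := exists_isPath_bends_eq_leafBend hG M hvc
  have hpW : p ∉ W.support := fun hpW =>
    hcp ((hG.eq_snd_of_adj_start hW hvc hcW).trans (hG.eq_snd_of_adj_start hW hpv.symm hpW).symm)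
  cases W with
  | nil => exact absurd (by simpa using hcW) hvc.ne.symm
  | cons h D =>
    have hc := hG.eq_snd_of_adj_start hW hvc hcW
    rw [snd_cons] at hc
    subst hc
    calc leafBend M v c + (if bendAt M.toFun p v c then 1 else 0)
        = bends M.toFun (cons hpv (cons h D)).support := by
          rw [← hbends, support_cons, support_cons, support_cons, ← D.cons_tail_support,
            bends_cons_cons_cons]
      _ ≤ leafBend M p v := le_leafBend M (hW.cons hpW) hf (by simp)

theorem TopTwo.adj_ne {M : SModel G} {p v a : V} {u : Option V} (h : TopTwo M p v (some a) u) :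
    G.Adj v a ∧ a ≠ p := by
  cases u <;> exact ⟨h.1, h.2.1⟩

-- Stated through `optVal`, so that the virtual neighbor `none` (value `-1`) needs no special case.
theorem Critical.optVal_le (hG : G.IsAcyclic) {M : SModel G} {p : V} {o : Option V}
    (h : Critical M p o) (N : SModel G) : optVal M p o ≤ optVal N p o := by
  induction h with
  | base => exact le_rfl
  | top1 p v u₁ u₂ hpv htop hval _ ih =>
    show (leafBend M p v : ℤ) ≤ leafBend N p v
    rw [hval]
    refine ih.trans ?_
    rcases u₁ with _ | a
    · simp [optVal]
    · obtain ⟨hva, hap⟩ := htop.adj_ne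
      have := leafBend_add_le_leafBend hG N hpv hva hap
      simp only [optVal]
      omega
  | top2 p v u₁ u₂ hpv htop hval _ _ ih₁ ih₂ =>
    show (leafBend M p v : ℤ) ≤ leafBend N p v
    rw [hval]
    rcases u₂ with _ | b
    · simp [optVal]
    rcases u₁ with _ | a
    · exact absurd htop.1 (by simp)
    obtain ⟨hva, hap, hvb, hbp, hab, hba, -⟩ := htop
    have hNa : leafBend M v b ≤ leafBend N v a := hba.trans (Int.ofNat_le.mp ih₁)
    have hNb : leafBend M v b ≤ leafBend N v b := Int.ofNat_le.mp ih₂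
    simp only [optVal]
    rcases N.bendAt_or_bendAt hpv.symm hva hvb hap.symm hbp.symm hab with h | h
    · have := leafBend_add_le_leafBend hG N hpv hva hap
      simp only [h, if_true] at this
      omega
    · have := leafBend_add_le_leafBend hG N hpv hvb hbp
      simp only [h, if_true] at this
      omega

end LeafPaths

theorem stmt_5_general {V : Type*} [Fintype V] (G : SimpleGraph V) [DecidableRel G.Adj]
    (hT : G.IsTree) (M : SModel G)
    (p v : V) (hcrit : Critical M p (some v)) :
    leafBend M p v ≤ treeBendNum G := by
  refine le_csInf ⟨bendNum M, M, rfl⟩ ?_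
  rintro _ ⟨N, rfl⟩
  have hpv : leafBend M p v ≤ leafBend N p v := Int.ofNat_le.mp (hcrit.optVal_le hT.isAcyclic N)
  exact hpv.trans (leafBend_le_bendNum hT.isAcyclic N p v)

theorem stmt_5 {V : Type*} [Fintype V] (G : SimpleGraph V) [DecidableRel G.Adj]
    (hT : G.IsTree) (hdeg : ∀ v, G.degree v ≤ 4) (M : SModel G)
    (p v : V) (hpv : G.Adj p v) (hcrit : Critical M p (some v)) :
    leafBend M p v ≤ treeBendNum G :=
  stmt_5_general G hT M p v hcrit
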